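/- arXiv:2006.10024 — 4 statements merged into one kernel-verified Lean document; each statement's English description precedes it below -/
import Mathlib

section
/- Let B be a symmetric positive semidefinite n×n real matrix. Then the infimum of trace(AᵀBA) over all n×n real matrices A with det A = 1 equals n·(det B)^{1/n}. -/
open Matrix

lemma trace_eq_sum_eigs {m : Type*} [Fintype m] [DecidableEq m] {M : Matrix m m ℝ}
    (hM : M.IsHermitian) : M.trace = ∑ i, hM.eigenvalues i := by
  nth_rewrite 1 [hM.spectral_theorem]
  rw [Unitary.conjStarAlgAut_apply, trace_mul_cycle]
  simp [Unitary.coe_star_mul_self, RCLike.ofReal_real_eq_id, Matrix.trace_diagonal]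

lemma det_eq_prod_eigs {m : Type*} [Fintype m] [DecidableEq m] {M : Matrix m m ℝ}
    (hM : M.IsHermitian) : M.det = ∏ i, hM.eigenvalues i := by
  simpa [RCLike.ofReal_real_eq_id] using hM.det_eq_prod_eigenvalues

lemma key_calc {m : Type*} [Fintype m] [DecidableEq m] (U B : Matrix m m ℝ) (d s : m → ℝ)
    (hstar : star U * U = 1) (hsd : B = U * diagonal d * star U) :
    ((U * diagonal s)ᵀ * B * (U * diagonal s)).trace = ∑ i, s i * d i * s i ∧
    (U * diagonal s).det = U.det * ∏ i, s i := by
  constructor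
  · have hT : (U * diagonal s)ᵀ = diagonal s * star U := by
      rw [transpose_mul, diagonal_transpose, ← conjTranspose_eq_transpose_of_trivial,
        ← star_eq_conjTranspose]
    rw [hT, hsd]
    have h2 : diagonal s * star U * (U * diagonal d * star U) * (U * diagonal s)
        = diagonal s * diagonal d * diagonal s := by
      calc diagonal s * star U * (U * diagonal d * star U) * (U * diagonal s)
          = diagonal s * ((star U * U) * (diagonal d * ((star U * U) * diagonal s))) := by
            noncomm_ring
        _ = _ := by rw [hstar]; noncomm_ring
    rw [h2, diagonal_mul_diagonal, diagonal_mul_diagonal, trace_diagonal]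
  · rw [det_mul, det_diagonal]

/-- Let `B` be a symmetric positive semidefinite `n × n` real matrix. Then the infimum of
`trace (Aᵀ * B * A)` over all `n × n` real matrices `A` with `det A = 1` equals
`n · (det B) ^ (1/n)`. -/
theorem sInf_trace_conj_posSemidef (n : ℕ) (hn : 0 < n) (B : Matrix (Fin n) (Fin n) ℝ)
    (hB : B.PosSemidef) :
    sInf {t : ℝ | ∃ A : Matrix (Fin n) (Fin n) ℝ, A.det = 1 ∧ t = (Aᵀ * B * A).trace} =
      n * B.det ^ ((1 : ℝ) / n) := by
  classical
  have hnR : (0:ℝ) < n := by exact_mod_cast hn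
  have hnR' : (n:ℝ) ≠ 0 := hnR.ne'
  -- spectral setup
  set U : Matrix (Fin n) (Fin n) ℝ := (hB.1.eigenvectorUnitary : Matrix (Fin n) (Fin n) ℝ)
    with hUdef
  have hstar : star U * U = 1 := Unitary.coe_star_mul_self _
  obtain ⟨d, hsd, hdnn, hdet⟩ : ∃ d : Fin n → ℝ, B = U * diagonal d * star U ∧
      (∀ i, 0 ≤ d i) ∧ B.det = ∏ i, d i := by
    refine ⟨hB.1.eigenvalues, ?_, hB.eigenvalues_nonneg, det_eq_prod_eigs hB.1⟩
    simpa [RCLike.ofReal_real_eq_id] using hB.1.spectral_theorem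
  have hUU : U.det * U.det = 1 := by
    have h1 : (star U * U).det = 1 := by rw [hstar, det_one]
    rwa [det_mul, star_eq_conjTranspose, conjTranspose_eq_transpose_of_trivial,
      det_transpose] at h1
  -- nonempty
  have hne : {t : ℝ | ∃ A : Matrix (Fin n) (Fin n) ℝ, A.det = 1 ∧
      t = (Aᵀ * B * A).trace}.Nonempty := ⟨B.trace, 1, det_one, by simp⟩
  refine csInf_eq_of_forall_ge_of_forall_gt_exists_lt hne ?_ ?_
  · -- lower bound via AM-GM
    rintro t ⟨A, hA, rfl⟩
    have hM : (Aᵀ * B * A).PosSemidef := by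
      have := hB.conjTranspose_mul_mul_same A
      rwa [conjTranspose_eq_transpose_of_trivial] at this
    have hμn : ∀ i, 0 ≤ hM.1.eigenvalues i := hM.eigenvalues_nonneg
    have htr : (Aᵀ*B*A).trace = ∑ i, hM.1.eigenvalues i := trace_eq_sum_eigs hM.1
    have hdetB : B.det = ∏ i, hM.1.eigenvalues i := by
      rw [← det_eq_prod_eigs hM.1, det_mul, det_mul, det_transpose, hA]; ring
    rw [htr, hdetB]
    have amgm := Real.geom_mean_le_arith_mean_weighted Finset.univ (fun _ => (1:ℝ)/n)
      hM.1.eigenvalues (fun i _ => by positivity)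
      (by simp [Finset.card_univ]; field_simp) (fun i _ => hμn i)
    have hprod : (∏ i, hM.1.eigenvalues i) ^ ((1:ℝ)/n) = ∏ i, hM.1.eigenvalues i ^ ((1:ℝ)/n) :=
      (Real.finset_prod_rpow _ _ (fun i _ => hμn i) _).symm
    calc (n:ℝ) * (∏ i, hM.1.eigenvalues i) ^ ((1:ℝ)/n)
        = n * ∏ i, hM.1.eigenvalues i ^ ((1:ℝ)/n) := by rw [hprod]
      _ ≤ n * ∑ i, (1:ℝ)/n * hM.1.eigenvalues i := by
          exact mul_le_mul_of_nonneg_left amgm hnR.le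
      _ = ∑ i, hM.1.eigenvalues i := by rw [← Finset.mul_sum]; field_simp
  · -- upper bound witnesses
    intro w hw
    by_cases hB0 : B.det = 0
    · -- degenerate case
      have hr0 : (n:ℝ) * B.det ^ ((1:ℝ)/n) = 0 := by
        rw [hB0, Real.zero_rpow (by positivity), mul_zero]
      have hw0 : 0 < w := by rw [hr0] at hw; exact hw
      obtain ⟨k, -, hk⟩ := Finset.prod_eq_zero_iff.mp (hdet ▸ hB0)
      set T := ∑ i, d i with hT
      have hT0 : 0 ≤ T := Finset.sum_nonneg fun i _ => hdnn i
      set ε := Real.sqrt (w / (T+1)) with hε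
      have hεpos : 0 < ε := Real.sqrt_pos.mpr (by positivity)
      have hεn : ε ^ (n-1) ≠ 0 := pow_ne_zero _ hεpos.ne'
      set s : Fin n → ℝ := fun i => if i = k then U.det / ε^(n-1) else ε with hs
      obtain ⟨htr, hdetA⟩ := key_calc U B d s hstar hsd
      refine ⟨_, ⟨U * diagonal s, ?_, rfl⟩, ?_⟩
      · rw [hdetA]
        have hps : ∏ i, s i = U.det / ε^(n-1) * ε^(n-1) := by
          rw [← Finset.mul_prod_erase _ _ (Finset.mem_univ k)]
          congr 1
          · simp [hs]
          · rw [Finset.prod_congr rfl (fun i hi => ?_), Finset.prod_const,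
              Finset.card_erase_of_mem (Finset.mem_univ k), Finset.card_univ, Fintype.card_fin]
            simp [hs, Finset.ne_of_mem_erase hi]
        rw [hps, div_mul_cancel₀ _ hεn, hUU]
      · rw [htr]
        have hsum : ∑ i, s i * d i * s i = (ε*ε) * T := by
          rw [hT, Finset.mul_sum]
          refine Finset.sum_congr rfl fun i _ => ?_
          by_cases h : i = k
          · subst h; simp [hs, hk]
          · simp only [hs, if_neg h]; ring
        have hε2 : ε * ε = w / (T+1) := Real.mul_self_sqrt (by positivity)
        rw [hsum, hε2, div_mul_eq_mul_div, div_lt_iff₀ (by positivity)]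
        nlinarith
    · -- positive definite case: minimum attained
      have hdpos : ∀ i, 0 < d i := by
        intro i
        rcases (hdnn i).lt_or_eq with h | h
        · exact h
        · exact absurd (by rw [hdet]; exact Finset.prod_eq_zero (Finset.mem_univ i) h.symm) hB0
      have hdetpos : 0 < B.det := by
        rw [hdet]; exact Finset.prod_pos fun i _ => hdpos i
      set g := B.det ^ ((1:ℝ)/(2*n)) with hg
      have hgpos : 0 < g := Real.rpow_pos_of_pos hdetpos _
      set k0 : Fin n := ⟨0, hn⟩
      set s : Fin n → ℝ := fun i => (if i = k0 then U.det else 1) * (g / Real.sqrt (d i)) with hs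
      obtain ⟨htr, hdetA⟩ := key_calc U B d s hstar hsd
      have hsqrt_ne : ∀ i, Real.sqrt (d i) ≠ 0 := fun i =>
        (Real.sqrt_pos.mpr (hdpos i)).ne'
      refine ⟨_, ⟨U * diagonal s, ?_, rfl⟩, ?_⟩
      · rw [hdetA]
        have hps : ∏ i, s i = U.det * ∏ i, (g / Real.sqrt (d i)) := by
          rw [hs, Finset.prod_mul_distrib]
          congr 1
          rw [Finset.prod_ite_eq' Finset.univ k0 (fun _ => U.det)]
          simp
        have hgn : g ^ n = Real.sqrt B.det := by
          rw [Real.sqrt_eq_rpow, hg, ← Real.rpow_natCast (B.det ^ ((1:ℝ)/(2*n))) n,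
            ← Real.rpow_mul hdetpos.le]
          congr 1
          field_simp
        have hprod_sqrt : ∏ i, Real.sqrt (d i) = Real.sqrt B.det := by
          rw [Real.sqrt_eq_rpow, hdet, ← Real.finset_prod_rpow _ _ (fun i _ => hdnn i)]
          exact Finset.prod_congr rfl fun i _ => (Real.sqrt_eq_rpow _)
        rw [hps, Finset.prod_div_distrib, Finset.prod_const, Finset.card_univ, Fintype.card_fin,
          hgn, hprod_sqrt, div_self (Real.sqrt_pos.mpr hdetpos).ne', mul_one, hUU]
      · rw [htr]
        have hterm : ∀ i, s i * d i * s i = g * g := by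
          intro i
          have hdd : Real.sqrt (d i) * Real.sqrt (d i) = d i := Real.mul_self_sqrt (hdnn i)
          have hne0 := hsqrt_ne i
          by_cases h : i = k0
          · simp only [hs, if_pos h]
            field_simp
            rw [Real.sq_sqrt (hdnn i)]
            linear_combination d i * hUU
          · simp only [hs, if_neg h, one_mul]
            field_simp
            rw [Real.sq_sqrt (hdnn i)]
        have hgg : g * g = B.det ^ ((1:ℝ)/n) := by
          have harith : (1:ℝ)/(2*n) + 1/(2*n) = 1/n := by
            rw [← add_div]
            rw [show (1:ℝ)+1 = 2 by norm_num, mul_comm, ← div_div]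
            ring
          rw [hg, ← Real.rpow_add hdetpos, harith]
        rw [Finset.sum_congr rfl fun i _ => hterm i, Finset.sum_const, Finset.card_univ,
          Fintype.card_fin, nsmul_eq_mul, hgg]
        exact hw
end

section
/- Let u be a C² function on an open set Ω ⊂ ℝⁿ with positive definite Hessian at a point x ∈ Ω. If θ > (Δu(x)/λ_min(D²u(x)))^{1/2}, then the infimum of trace(AᵀD²u(x)A) over symmetric positive definite matrices A with det A = 1 equals the infimum of the same quantity restricted additionally to A ≤ θ·I. -/
open Matrix

section Helpers

variable {N : ℕ}

lemma psd_trace_nonneg {M : Matrix (Fin N) (Fin N) ℝ} (hM : M.PosSemidef) :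
    0 ≤ M.trace := by
  refine Finset.sum_nonneg fun i _ => ?_
  simpa using hM.dotProduct_mulVec_nonneg (Pi.single i 1)

lemma dot_self_nonneg (v : Fin N → ℝ) : 0 ≤ v ⬝ᵥ v :=
  Finset.sum_nonneg fun i _ => mul_self_nonneg _

lemma dot_self_pos {v : Fin N → ℝ} (hv : v ≠ 0) : 0 < v ⬝ᵥ v := by
  obtain ⟨i, hi⟩ := Function.ne_iff.mp hv
  have h1 : 0 < v i * v i := mul_self_pos.mpr hi
  have : v i * v i ≤ v ⬝ᵥ v :=
    Finset.single_le_sum (fun j _ => mul_self_nonneg (v j)) (Finset.mem_univ i)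
  linarith

lemma dot_le_trace {M : Matrix (Fin N) (Fin N) ℝ} (hM : M.PosSemidef) (v : Fin N → ℝ) :
    v ⬝ᵥ (M *ᵥ v) ≤ M.trace * (v ⬝ᵥ v) := by
  obtain ⟨B, rfl⟩ : ∃ B : Matrix (Fin N) (Fin N) ℝ, M = Bᴴ * B := by
    classical
    open scoped MatrixOrder in exact CStarAlgebra.nonneg_iff_eq_star_mul_self.mp hM.nonneg
  have hL : v ⬝ᵥ ((Bᴴ * B) *ᵥ v) = (B *ᵥ v) ⬝ᵥ (B *ᵥ v) := by
    rw [← mulVec_mulVec, dotProduct_mulVec, conjTranspose_eq_transpose_of_trivial,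
      vecMul_transpose]
  have hT : (Bᴴ * B).trace = ∑ i, ∑ j, B i j ^ 2 := by
    rw [Finset.sum_comm]
    simp [Matrix.trace, Matrix.diag, Matrix.mul_apply, pow_two]
  rw [hL, hT]
  have key : (B *ᵥ v) ⬝ᵥ (B *ᵥ v) = ∑ i, (∑ j, B i j * v j) ^ 2 := by
    simp [dotProduct, mulVec, pow_two]
  rw [key, Finset.sum_mul]
  refine Finset.sum_le_sum fun i _ => ?_
  have := Finset.sum_mul_sq_le_sq_mul_sq Finset.univ (fun j => B i j) v
  calc (∑ j, B i j * v j) ^ 2 ≤ (∑ j, B i j ^ 2) * ∑ j, v j ^ 2 := this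
    _ = (∑ j, B i j ^ 2) * (v ⬝ᵥ v) := by simp [dotProduct, pow_two]

lemma trace_eq_sum_eigenvalues {M : Matrix (Fin N) (Fin N) ℝ} (hM : M.IsHermitian) :
    M.trace = ∑ i, hM.eigenvalues i := by
  conv_lhs => rw [hM.spectral_theorem, Unitary.conjStarAlgAut_apply]
  rw [trace_mul_cycle, (Matrix.mem_unitaryGroup_iff').mp hM.eigenvectorUnitary.2, one_mul,
    trace_diagonal]
  simp

lemma sub_smul_one_posSemidef {M : Matrix (Fin N) (Fin N) ℝ} (hM : M.IsHermitian) {c : ℝ}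
    (hc : ∀ i, c ≤ hM.eigenvalues i) : (M - c • 1).PosSemidef := by
  set U : Matrix (Fin N) (Fin N) ℝ := (hM.eigenvectorUnitary : Matrix (Fin N) (Fin N) ℝ)
  have hU : U * star U = 1 := (Matrix.mem_unitaryGroup_iff).mp hM.eigenvectorUnitary.2
  have key : M - c • 1 = U * diagonal (fun i => hM.eigenvalues i - c) * star U := by
    have hd : (diagonal (fun i => hM.eigenvalues i - c) : Matrix (Fin N) (Fin N) ℝ)
        = diagonal (RCLike.ofReal ∘ hM.eigenvalues) - c • 1 := by
      rw [smul_one_eq_diagonal, ← diagonal_sub]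
      congr 1
    rw [hd, Matrix.mul_sub, Matrix.sub_mul, Matrix.mul_smul, Matrix.mul_one, Matrix.smul_mul, hU]
    conv_lhs => rw [hM.spectral_theorem, Unitary.conjStarAlgAut_apply]
  rw [key]
  exact (PosSemidef.diagonal fun i => sub_nonneg.mpr (hc i)).mul_mul_conjTranspose_same U

end Helpers

/-- Let `u` be `C²` on an open set `Ω ⊆ ℝⁿ` with positive definite Hessian `H = D²u(x)` at a
point `x ∈ Ω`. If `θ > (Δu(x) / λ_min(D²u(x)))^(1/2)`, then the infimum of
`trace (Aᵀ H A)` over symmetric positive definite `A` with `det A = 1` equals the infimum of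
the same quantity additionally restricted to `A ≤ θ • I`. -/
theorem inf_trace_restricted_eq (n : ℕ) (hn : 0 < n)
    (Ω : Set (EuclideanSpace ℝ (Fin n))) (hΩ : IsOpen Ω)
    (u : EuclideanSpace ℝ (Fin n) → ℝ) (hu : ContDiffOn ℝ 2 u Ω)
    (x : EuclideanSpace ℝ (Fin n)) (hx : x ∈ Ω)
    (H : Matrix (Fin n) (Fin n) ℝ)
    (hH : ∀ i j, H i j =
      iteratedFDerivWithin ℝ 2 u Ω x ![EuclideanSpace.single i 1, EuclideanSpace.single j 1])
    (hHpd : H.PosDef) (θ : ℝ)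
    (hθ : Real.sqrt (H.trace / ⨅ i, hHpd.isHermitian.eigenvalues i) < θ) :
    sInf {t : ℝ | ∃ A : Matrix (Fin n) (Fin n) ℝ,
        A.PosDef ∧ A.det = 1 ∧ t = (Aᵀ * H * A).trace} =
      sInf {t : ℝ | ∃ A : Matrix (Fin n) (Fin n) ℝ,
        A.PosDef ∧ A.det = 1 ∧ (θ • (1 : Matrix (Fin n) (Fin n) ℝ) - A).PosSemidef ∧
        t = (Aᵀ * H * A).trace} := by
  haveI : NeZero n := ⟨hn.ne'⟩
  set lam := ⨅ i, hHpd.isHermitian.eigenvalues i with hlam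
  have hlamle : ∀ i, lam ≤ hHpd.isHermitian.eigenvalues i := fun i =>
    ciInf_le (Set.Finite.bddBelow (Set.finite_range _)) i
  obtain ⟨i₀, hi₀⟩ := Finite.exists_min hHpd.isHermitian.eigenvalues
  have hlampos : 0 < lam := lt_of_lt_of_le (hHpd.eigenvalues_pos i₀) (le_ciInf hi₀)
  have htraceH : H.trace = ∑ i, hHpd.isHermitian.eigenvalues i :=
    trace_eq_sum_eigenvalues hHpd.isHermitian
  have hHtr_pos : lam ≤ H.trace := by
    rw [htraceH]
    calc lam ≤ hHpd.isHermitian.eigenvalues i₀ := hlamle i₀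
      _ ≤ ∑ i, hHpd.isHermitian.eigenvalues i :=
        Finset.single_le_sum (fun i _ => (hHpd.eigenvalues_pos i).le) (Finset.mem_univ i₀)
  have hθ1 : 1 < θ := by
    have h1 : (1:ℝ) ≤ H.trace / lam := (one_le_div hlampos).mpr hHtr_pos
    have := Real.sqrt_le_sqrt h1
    rw [Real.sqrt_one] at this
    linarith
  have hθpos : 0 < θ := by linarith
  have hlt : H.trace < lam * θ ^ 2 := by
    have := (Real.sqrt_lt' hθpos).mp hθ
    calc H.trace = lam * (H.trace / lam) := by field_simp
      _ < lam * θ ^ 2 := by exact mul_lt_mul_of_pos_left this hlampos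
  have hpsdAHA : ∀ A : Matrix (Fin n) (Fin n) ℝ, (Aᵀ * H * A).PosSemidef := fun A => by
    rw [← conjTranspose_eq_transpose_of_trivial]
    exact hHpd.posSemidef.conjTranspose_mul_mul_same A
  have bdd₁ : BddBelow {t : ℝ | ∃ A : Matrix (Fin n) (Fin n) ℝ,
      A.PosDef ∧ A.det = 1 ∧ t = (Aᵀ * H * A).trace} := by
    refine ⟨0, ?_⟩
    rintro t ⟨A, -, -, rfl⟩
    exact psd_trace_nonneg (hpsdAHA A)
  have bdd₂ : BddBelow {t : ℝ | ∃ A : Matrix (Fin n) (Fin n) ℝ,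
      A.PosDef ∧ A.det = 1 ∧ (θ • (1 : Matrix (Fin n) (Fin n) ℝ) - A).PosSemidef ∧
      t = (Aᵀ * H * A).trace} := by
    refine ⟨0, ?_⟩
    rintro t ⟨A, -, -, -, rfl⟩
    exact psd_trace_nonneg (hpsdAHA A)
  have honepsd : (θ • (1 : Matrix (Fin n) (Fin n) ℝ) - 1).PosSemidef := by
    have h : θ • (1 : Matrix (Fin n) (Fin n) ℝ) - 1 = (θ - 1) • 1 := by
      rw [sub_smul, one_smul]
    rw [h, smul_one_eq_diagonal]
    exact PosSemidef.diagonal (Pi.le_def.mpr fun i => by simp; linarith)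
  have hmem₂ : H.trace ∈ {t : ℝ | ∃ A : Matrix (Fin n) (Fin n) ℝ,
      A.PosDef ∧ A.det = 1 ∧ (θ • (1 : Matrix (Fin n) (Fin n) ℝ) - A).PosSemidef ∧
      t = (Aᵀ * H * A).trace} :=
    ⟨1, Matrix.PosDef.one, det_one, honepsd, by simp⟩
  have hmem₁ : H.trace ∈ {t : ℝ | ∃ A : Matrix (Fin n) (Fin n) ℝ,
      A.PosDef ∧ A.det = 1 ∧ t = (Aᵀ * H * A).trace} :=
    ⟨1, Matrix.PosDef.one, det_one, by simp⟩
  have key : ∀ A : Matrix (Fin n) (Fin n) ℝ, A.PosDef →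
      ¬(θ • (1 : Matrix (Fin n) (Fin n) ℝ) - A).PosSemidef →
      lam * θ ^ 2 ≤ (Aᵀ * H * A).trace := by
    intro A hA hviol
    have hherm : (θ • (1 : Matrix (Fin n) (Fin n) ℝ) - A).IsHermitian := by
      simp only [Matrix.IsHermitian, conjTranspose_sub, conjTranspose_smul, conjTranspose_one,
        star_trivial, hA.1.eq]
    obtain ⟨v, hv⟩ : ∃ v : Fin n → ℝ,
        v ⬝ᵥ ((θ • (1 : Matrix (Fin n) (Fin n) ℝ) - A) *ᵥ v) < 0 := by
      by_contra h
      push_neg at h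
      exact hviol (PosSemidef.of_dotProduct_mulVec_nonneg hherm fun x => by simpa using h x)
    have hv' : θ * (v ⬝ᵥ v) < v ⬝ᵥ (A *ᵥ v) := by
      rw [sub_mulVec, dotProduct_sub, smul_mulVec, one_mulVec, dotProduct_smul,
        smul_eq_mul] at hv
      linarith
    have hvne : v ≠ 0 := by
      rintro rfl
      simp at hv'
    have hvv : 0 < v ⬝ᵥ v := dot_self_pos hvne
    have hAA : (Aᵀ * A).PosSemidef := by
      rw [← conjTranspose_eq_transpose_of_trivial]
      exact posSemidef_conjTranspose_mul_self A
    have h1 : v ⬝ᵥ ((Aᵀ * A) *ᵥ v) = (A *ᵥ v) ⬝ᵥ (A *ᵥ v) := by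
      rw [← mulVec_mulVec, dotProduct_mulVec, vecMul_transpose]
    have h2 : (v ⬝ᵥ (A *ᵥ v)) ^ 2 ≤ (v ⬝ᵥ v) * ((A *ᵥ v) ⬝ᵥ (A *ᵥ v)) := by
      have := Finset.sum_mul_sq_le_sq_mul_sq Finset.univ v (A *ᵥ v)
      simpa [dotProduct, pow_two] using this
    have h3 : (A *ᵥ v) ⬝ᵥ (A *ᵥ v) ≤ (Aᵀ * A).trace * (v ⬝ᵥ v) :=
      h1 ▸ dot_le_trace hAA v
    have hθvv : (θ * (v ⬝ᵥ v)) ^ 2 < (v ⬝ᵥ (A *ᵥ v)) ^ 2 := by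
      apply pow_lt_pow_left₀ hv' (by positivity) two_ne_zero
    have htrA : θ ^ 2 ≤ (Aᵀ * A).trace := by
      have hble : (v ⬝ᵥ v) * ((A *ᵥ v) ⬝ᵥ (A *ᵥ v)) ≤ (Aᵀ * A).trace * (v ⬝ᵥ v) ^ 2 :=
        calc (v ⬝ᵥ v) * ((A *ᵥ v) ⬝ᵥ (A *ᵥ v))
            ≤ (v ⬝ᵥ v) * ((Aᵀ * A).trace * (v ⬝ᵥ v)) := mul_le_mul_of_nonneg_left h3 hvv.le
          _ = (Aᵀ * A).trace * (v ⬝ᵥ v) ^ 2 := by ring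
      have h' : (θ * (v ⬝ᵥ v)) ^ 2 = θ ^ 2 * (v ⬝ᵥ v) ^ 2 := by ring
      have hmain : θ ^ 2 * (v ⬝ᵥ v) ^ 2 < (Aᵀ * A).trace * (v ⬝ᵥ v) ^ 2 := by linarith
      exact le_of_lt (lt_of_mul_lt_mul_right hmain (sq_nonneg _))
    have hsub : (H - lam • 1).PosSemidef := sub_smul_one_posSemidef hHpd.isHermitian hlamle
    have hpsd2 : (Aᵀ * (H - lam • 1) * A).PosSemidef := by
      rw [← conjTranspose_eq_transpose_of_trivial]
      exact hsub.conjTranspose_mul_mul_same A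
    have hexp : Aᵀ * (H - lam • 1) * A = Aᵀ * H * A - lam • (Aᵀ * A) := by
      rw [Matrix.mul_sub, Matrix.sub_mul, Matrix.mul_smul, Matrix.mul_one, Matrix.smul_mul]
    have htr : lam * (Aᵀ * A).trace ≤ (Aᵀ * H * A).trace := by
      have h0 := psd_trace_nonneg hpsd2
      rw [hexp, trace_sub, trace_smul, smul_eq_mul] at h0
      linarith
    nlinarith [htr, htrA, hlampos]
  refine le_antisymm (csInf_le_csInf bdd₁ ⟨H.trace, hmem₂⟩ ?_) (le_csInf ⟨H.trace, hmem₁⟩ ?_)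
  · rintro t ⟨A, h1, h2, h3, h4⟩
    exact ⟨A, h1, h2, h4⟩
  · rintro t ⟨A, hA, hdet, rfl⟩
    by_cases hc : (θ • (1 : Matrix (Fin n) (Fin n) ℝ) - A).PosSemidef
    · exact csInf_le bdd₂ ⟨A, hA, hdet, hc, rfl⟩
    · have hk := key A hA hc
      have h5 := csInf_le bdd₂ hmem₂
      linarith
end

section
/- Let P be a convex paraboloid on ℝⁿ, i.e. P(z) = P(x) + ⟨b, z−x⟩ + ½⟨M(z−x), z−x⟩ with M symmetric positive semidefinite. Then for every x ∈ ℝⁿ and ε > 0, the infimum over all matrices A with det A = 1 of the average of P(x+Ay) over B_ε(0) equals P(x) + (n/(2(n+2)))·(det M)^{1/n}·ε². -/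
open Matrix MeasureTheory Metric
open scoped RealInnerProductSpace

section Helpers

variable {n : ℕ}

private lemma contIntOn {f : EuclideanSpace ℝ (Fin n) → ℝ} (hf : Continuous f) (ε : ℝ) :
    IntegrableOn f (ball (0 : EuclideanSpace ℝ (Fin n)) ε) :=
  (hf.continuousOn.integrableOn_compact (isCompact_closedBall 0 ε)).mono_set
    ball_subset_closedBall

private lemma integral_comp_isometry
    (e : EuclideanSpace ℝ (Fin n) ≃ₗᵢ[ℝ] EuclideanSpace ℝ (Fin n))
    (f : EuclideanSpace ℝ (Fin n) → ℝ) (ε : ℝ) :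
    ∫ y in ball (0 : EuclideanSpace ℝ (Fin n)) ε, f (e y)
      = ∫ y in ball (0 : EuclideanSpace ℝ (Fin n)) ε, f y := by
  have hpre : e ⁻¹' (ball (0 : EuclideanSpace ℝ (Fin n)) ε) = ball 0 ε := by
    ext y
    simp [mem_ball_zero_iff, e.norm_map]
  calc ∫ y in ball (0 : EuclideanSpace ℝ (Fin n)) ε, f (e y)
      = ∫ y in e ⁻¹' (ball 0 ε), f (e y) := by rw [hpre]
    _ = ∫ y in ball (0 : EuclideanSpace ℝ (Fin n)) ε, f y :=
        (e.measurePreserving).setIntegral_preimage_emb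
          e.toHomeomorph.measurableEmbedding f _

private lemma cross_zero (ε : ℝ) {i j : Fin n} (h : i ≠ j) :
    ∫ y in ball (0 : EuclideanSpace ℝ (Fin n)) ε, (y i * y j) = 0 := by
  classical
  set e : EuclideanSpace ℝ (Fin n) ≃ₗᵢ[ℝ] EuclideanSpace ℝ (Fin n) :=
    LinearIsometryEquiv.piLpCongrRight 2
      (fun k => if k = j then LinearIsometryEquiv.neg ℝ else .refl ℝ ℝ)
  have key : ∀ y : EuclideanSpace ℝ (Fin n), (e y) i * (e y) j = -(y i * y j) := by
    intro y
    have h1 : (e y) i = y i := by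
      simp [e, LinearIsometryEquiv.piLpCongrRight_apply, h]
    have h2 : (e y) j = -(y j) := by
      simp [e, LinearIsometryEquiv.piLpCongrRight_apply]
    rw [h1, h2]; ring
  have := integral_comp_isometry e (fun y => y i * y j) ε
  simp only [key] at this
  rw [integral_neg] at this
  linarith

private lemma diag_eq (ε : ℝ) (i j : Fin n) :
    ∫ y in ball (0 : EuclideanSpace ℝ (Fin n)) ε, (y i)^2
      = ∫ y in ball (0 : EuclideanSpace ℝ (Fin n)) ε, (y j)^2 := by
  classical
  set e : EuclideanSpace ℝ (Fin n) ≃ₗᵢ[ℝ] EuclideanSpace ℝ (Fin n) :=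
    LinearIsometryEquiv.piLpCongrLeft 2 ℝ ℝ (Equiv.swap i j)
  have key : ∀ y : EuclideanSpace ℝ (Fin n), ((e y) i)^2 = (y j)^2 := by
    intro y
    have h1 : (e y) i = y (Equiv.swap i j i) := by
      simp [e, LinearIsometryEquiv.piLpCongrLeft_apply, Equiv.piCongrLeft'_apply,
        Equiv.symm_swap]
    rw [h1, Equiv.swap_apply_left]
  have := integral_comp_isometry e (fun y => (y i)^2) ε
  simp only [key] at this
  rw [← this]

private lemma quad_integral (C : Matrix (Fin n) (Fin n) ℝ) (ε : ℝ) (i₀ : Fin n) :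
    ∫ y in ball (0 : EuclideanSpace ℝ (Fin n)) ε, ⟪Matrix.toEuclideanLin C y, y⟫
      = C.trace * ∫ y in ball (0 : EuclideanSpace ℝ (Fin n)) ε, (y i₀)^2 := by
  have hcont : ∀ i j : Fin n,
      Continuous (fun y : EuclideanSpace ℝ (Fin n) => C i j * (y j * y i)) :=
    fun i j => continuous_const.mul ((PiLp.continuous_apply 2 _ j).mul (PiLp.continuous_apply 2 _ i))
  have expand : ∀ y : EuclideanSpace ℝ (Fin n),
      ⟪Matrix.toEuclideanLin C y, y⟫ = ∑ i, ∑ j, C i j * (y j * y i) := by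
    intro y
    simp [PiLp.inner_apply, RCLike.inner_apply, conj_trivial, toEuclideanLin_apply,
      mulVec, dotProduct, Finset.sum_mul, mul_assoc]
    simp only [Finset.mul_sum]
    exact Finset.sum_congr rfl fun _ _ => Finset.sum_congr rfl fun _ _ => by ring
  rw [setIntegral_congr_fun measurableSet_ball (fun y _ => expand y)]
  rw [integral_finset_sum _ (fun i _ => integrable_finset_sum _
    (fun j _ => contIntOn (hcont i j) ε))]
  have step : ∀ i : Fin n,
      (∫ y in ball (0 : EuclideanSpace ℝ (Fin n)) ε, ∑ j, C i j * (y j * y i))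
        = C i i * ∫ y in ball (0 : EuclideanSpace ℝ (Fin n)) ε, (y i₀)^2 := by
    intro i
    rw [integral_finset_sum _ (fun j _ => contIntOn (hcont i j) ε)]
    rw [Finset.sum_eq_single i]
    · rw [integral_const_mul]
      have : (∫ y in ball (0 : EuclideanSpace ℝ (Fin n)) ε, (y i * y i))
          = ∫ y in ball (0 : EuclideanSpace ℝ (Fin n)) ε, (y i)^2 := by
        congr 1 with y; ring
      rw [this, diag_eq ε i i₀]
    · intro j _ hj
      rw [integral_const_mul, cross_zero ε hj, mul_zero]
    · intro h; exact absurd (Finset.mem_univ i) h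
  simp only [step]
  rw [← Finset.sum_mul]
  rfl

private lemma norm_sq_integral (hn : 0 < n) {ε : ℝ} (hε : 0 < ε) :
    ∫ y in ball (0 : EuclideanSpace ℝ (Fin n)) ε, ‖y‖^2
      = n * (volume (ball (0 : EuclideanSpace ℝ (Fin n)) 1)).toReal * (ε^(n+2) / (n+2)) := by
  haveI : Nonempty (Fin n) := ⟨⟨0, hn⟩⟩
  haveI : Nontrivial (EuclideanSpace ℝ (Fin n)) := inferInstance
  set f : ℝ → ℝ := fun r => if r < ε then r^2 else 0 with hf
  have h1 : ∫ y in ball (0 : EuclideanSpace ℝ (Fin n)) ε, ‖y‖^2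
      = ∫ y : EuclideanSpace ℝ (Fin n), f ‖y‖ := by
    rw [← integral_indicator measurableSet_ball]
    congr 1 with y
    classical
    rw [Set.indicator_apply]
    simp only [mem_ball_zero_iff, hf]
  rw [h1, integral_fun_norm_addHaar (volume : Measure (EuclideanSpace ℝ (Fin n))) f]
  have hdim : Module.finrank ℝ (EuclideanSpace ℝ (Fin n)) = n := finrank_euclideanSpace_fin
  rw [hdim]
  have h2 : ∫ y in Set.Ioi (0:ℝ), y ^ (n-1) • f y = ε^(n+2) / (n+2) := by
    have hcong : ∀ y ∈ Set.Ioi (0:ℝ),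
        y ^ (n-1) • f y = (Set.Ioo (0:ℝ) ε).indicator (fun r => r^(n+1)) y := by
      intro y hy
      simp only [smul_eq_mul, hf, Set.indicator_apply, Set.mem_Ioo]
      by_cases h : y < ε
      · simp only [h, if_true, hy.out, true_and]
        rw [← pow_add]
        congr 1
        omega
      · simp [h]
    rw [setIntegral_congr_fun measurableSet_Ioi hcong,
      setIntegral_indicator measurableSet_Ioo]
    have : Set.Ioi (0:ℝ) ∩ Set.Ioo (0:ℝ) ε = Set.Ioo 0 ε := by
      ext y; simp only [Set.mem_inter_iff, Set.mem_Ioo, Set.mem_Ioi]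
      tauto
    rw [this, ← integral_Ioc_eq_integral_Ioo,
      ← intervalIntegral.integral_of_le hε.le, integral_pow]
    simp [zero_pow]
    ring
  rw [h2]
  simp only [nsmul_eq_mul, smul_eq_mul, measureReal_def]
  ring

private lemma coord_sq_integral (hn : 0 < n) (i₀ : Fin n) {ε : ℝ} (hε : 0 < ε) :
    ∫ y in ball (0 : EuclideanSpace ℝ (Fin n)) ε, (y i₀)^2
      = (volume (ball (0 : EuclideanSpace ℝ (Fin n)) 1)).toReal * (ε^(n+2) / (n+2)) := by
  have hsum : (n : ℝ) * ∫ y in ball (0 : EuclideanSpace ℝ (Fin n)) ε, (y i₀)^2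
      = ∫ y in ball (0 : EuclideanSpace ℝ (Fin n)) ε, ‖y‖^2 := by
    have hnorm : ∀ y : EuclideanSpace ℝ (Fin n), ‖y‖^2 = ∑ i, (y i)^2 := by
      intro y
      rw [EuclideanSpace.norm_sq_eq]
      simp [Real.norm_eq_abs, sq_abs]
    calc (n : ℝ) * ∫ y in ball (0 : EuclideanSpace ℝ (Fin n)) ε, (y i₀)^2
        = ∑ i : Fin n, ∫ y in ball (0 : EuclideanSpace ℝ (Fin n)) ε, (y i)^2 := by
          rw [Finset.sum_congr rfl (fun i _ => diag_eq ε i i₀)]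
          simp [Finset.sum_const, mul_comm]
      _ = ∫ y in ball (0 : EuclideanSpace ℝ (Fin n)) ε, ∑ i, (y i)^2 := by
          rw [integral_finset_sum _ (fun i _ =>
            contIntOn (f := fun y : EuclideanSpace ℝ (Fin n) => y i ^ 2) ((PiLp.continuous_apply 2 _ i).pow 2) ε)]
      _ = ∫ y in ball (0 : EuclideanSpace ℝ (Fin n)) ε, ‖y‖^2 := by
          exact (setIntegral_congr_fun measurableSet_ball (fun y _ => (hnorm y).symm))
  have hn' : (n : ℝ) ≠ 0 := Nat.cast_ne_zero.mpr hn.ne'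
  apply mul_left_cancel₀ hn'
  rw [hsum, norm_sq_integral hn hε]
  ring

private lemma linear_integral_zero (b : EuclideanSpace ℝ (Fin n))
    (A : Matrix (Fin n) (Fin n) ℝ) (ε : ℝ) :
    ∫ y in ball (0 : EuclideanSpace ℝ (Fin n)) ε, ⟪b, Matrix.toEuclideanLin A y⟫ = 0 := by
  have := integral_comp_isometry (LinearIsometryEquiv.neg ℝ)
    (fun y => ⟪b, Matrix.toEuclideanLin A y⟫) ε
  simp only [LinearIsometryEquiv.coe_neg] at this
  simp only [map_neg, inner_neg_right] at this
  rw [integral_neg] at this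
  linarith

private lemma quad_rewrite (M A : Matrix (Fin n) (Fin n) ℝ) (y : EuclideanSpace ℝ (Fin n)) :
    ⟪Matrix.toEuclideanLin M (Matrix.toEuclideanLin A y), Matrix.toEuclideanLin A y⟫
      = ⟪Matrix.toEuclideanLin (Aᵀ * M * A) y, y⟫ := by
  have hdp : ∀ (v w : EuclideanSpace ℝ (Fin n)), ⟪v, w⟫ =
      dotProduct (WithLp.equiv 2 (Fin n → ℝ) v) (WithLp.equiv 2 (Fin n → ℝ) w) := by
    intro v w
    simp [PiLp.inner_apply, RCLike.inner_apply, conj_trivial, dotProduct]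
    exact Finset.sum_congr rfl (fun _ _ => mul_comm _ _)
  rw [hdp, hdp]
  set u := WithLp.equiv 2 (Fin n → ℝ) y with hu
  have h1 : WithLp.equiv 2 (Fin n → ℝ) (Matrix.toEuclideanLin A y) = A *ᵥ u := rfl
  have h2 : WithLp.equiv 2 (Fin n → ℝ)
      (Matrix.toEuclideanLin M (Matrix.toEuclideanLin A y)) = M *ᵥ (A *ᵥ u) := rfl
  have h3 : WithLp.equiv 2 (Fin n → ℝ) (Matrix.toEuclideanLin (Aᵀ * M * A) y)
      = (Aᵀ * M * A) *ᵥ u := rfl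
  rw [h1, h2, h3]
  rw [dotProduct_mulVec, ← mulVec_transpose, mulVec_mulVec, mulVec_mulVec, Matrix.mul_assoc]

private lemma average_eq (hn : 0 < n)
    (M : Matrix (Fin n) (Fin n) ℝ)
    (b x : EuclideanSpace ℝ (Fin n)) (P : EuclideanSpace ℝ (Fin n) → ℝ)
    (hP : ∀ z, P z = P x + ⟪b, z - x⟫ + (1 / 2) * ⟪Matrix.toEuclideanLin M (z - x), z - x⟫)
    {ε : ℝ} (hε : 0 < ε) (A : Matrix (Fin n) (Fin n) ℝ) :
    (⨍ y in ball (0 : EuclideanSpace ℝ (Fin n)) ε, P (x + Matrix.toEuclideanLin A y))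
      = P x + (Aᵀ * M * A).trace * (ε^2 / (2 * (n + 2))) := by
  haveI : Nonempty (Fin n) := ⟨⟨0, hn⟩⟩
  haveI : Nontrivial (EuclideanSpace ℝ (Fin n)) := inferInstance
  set i₀ : Fin n := ⟨0, hn⟩
  set C := Aᵀ * M * A with hC
  set V1 := (volume (ball (0 : EuclideanSpace ℝ (Fin n)) 1)).toReal with hV1
  have hV1pos : 0 < V1 :=
    ENNReal.toReal_pos (measure_ball_pos volume 0 one_pos).ne' measure_ball_lt_top.ne
  have hLcont : Continuous (Matrix.toEuclideanLin A) :=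
    LinearMap.continuous_of_finiteDimensional _
  have hLcont' : Continuous (Matrix.toEuclideanLin C) :=
    LinearMap.continuous_of_finiteDimensional _
  have hpoint : ∀ y : EuclideanSpace ℝ (Fin n), P (x + Matrix.toEuclideanLin A y)
      = P x + ⟪b, Matrix.toEuclideanLin A y⟫
        + (1/2) * ⟪Matrix.toEuclideanLin C y, y⟫ := by
    intro y
    rw [hP (x + Matrix.toEuclideanLin A y), add_sub_cancel_left, quad_rewrite]
  have hlin : Continuous (fun y : EuclideanSpace ℝ (Fin n) => ⟪b, Matrix.toEuclideanLin A y⟫) :=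
    Continuous.inner continuous_const hLcont
  have hquad : Continuous (fun y : EuclideanSpace ℝ (Fin n) =>
      (1/2) * ⟪Matrix.toEuclideanLin C y, y⟫) :=
    continuous_const.mul (Continuous.inner hLcont' continuous_id)
  have hI : ∫ y in ball (0 : EuclideanSpace ℝ (Fin n)) ε, P (x + Matrix.toEuclideanLin A y)
      = P x * (volume (ball (0 : EuclideanSpace ℝ (Fin n)) ε)).toReal
        + (1/2) * (C.trace * (V1 * (ε^(n+2) / (n+2)))) := by
    rw [setIntegral_congr_fun measurableSet_ball (fun y _ => hpoint y)]
    have ha : IntegrableOn (fun _ : EuclideanSpace ℝ (Fin n) => P x) (ball 0 ε) :=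
      integrableOn_const measure_ball_lt_top.ne
    have hab : IntegrableOn (fun y : EuclideanSpace ℝ (Fin n) =>
        P x + ⟪b, Matrix.toEuclideanLin A y⟫) (ball 0 ε) := ha.add (contIntOn hlin ε)
    rw [integral_add hab (contIntOn hquad ε), integral_add ha (contIntOn hlin ε)]
    rw [setIntegral_const, linear_integral_zero, integral_const_mul,
      quad_integral C ε i₀, coord_sq_integral hn i₀ hε]
    simp [smul_eq_mul, measureReal_def, hV1]
    ring
  rw [setAverage_eq, hI, smul_eq_mul]
  have hvol : (volume (ball (0 : EuclideanSpace ℝ (Fin n)) ε)).toReal = ε^n * V1 := by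
    rw [Measure.addHaar_ball volume 0 hε.le, ENNReal.toReal_mul, finrank_euclideanSpace_fin,
      ENNReal.toReal_ofReal (pow_nonneg hε.le n)]
  rw [measureReal_def, hvol]
  have hεn : (0:ℝ) < ε^n := pow_pos hε n
  have hn2 : (0:ℝ) < (n:ℝ) + 2 := by positivity
  have hεpow : ε^(n+2) = ε^n * ε^2 := pow_add ε n 2
  field_simp
  rw [hεpow]
  ring

private lemma trace_eq_sum_eigen {C : Matrix (Fin n) (Fin n) ℝ} (hC : C.IsHermitian) :
    C.trace = ∑ i, hC.eigenvalues i := by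
  conv_lhs => rw [hC.spectral_theorem, Unitary.conjStarAlgAut_apply]
  rw [Matrix.trace_mul_comm, ← Matrix.mul_assoc, Unitary.coe_star_mul_self, Matrix.one_mul,
    Matrix.trace_diagonal]
  simp

private lemma lower_bound (hn : 0 < n) {M : Matrix (Fin n) (Fin n) ℝ} (hM : M.PosSemidef)
    {A : Matrix (Fin n) (Fin n) ℝ} (hA : A.det = 1) :
    (n : ℝ) * M.det ^ ((1 : ℝ) / n) ≤ (Aᵀ * M * A).trace := by
  have hC : (Aᵀ * M * A).PosSemidef := by
    have := hM.conjTranspose_mul_mul_same A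
    rwa [conjTranspose_eq_transpose_of_trivial] at this
  set C := Aᵀ * M * A with hCdef
  have hdet : C.det = M.det := by
    rw [hCdef, Matrix.det_mul, Matrix.det_mul, Matrix.det_transpose, hA]
    ring
  set lam := hC.1.eigenvalues with hlam
  have hnonneg : ∀ i, 0 ≤ lam i := hC.eigenvalues_nonneg
  have htr : C.trace = ∑ i, lam i := trace_eq_sum_eigen hC.1
  have hdet2 : C.det = ∏ i, lam i := by
    rw [hC.1.det_eq_prod_eigenvalues]; simp [hlam]
  have hn' : (n : ℝ) ≠ 0 := Nat.cast_ne_zero.mpr hn.ne'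
  have amgm := Real.geom_mean_le_arith_mean_weighted Finset.univ
    (fun _ : Fin n => 1 / n) lam (fun i _ => by positivity)
    (by simp [Finset.sum_const]; field_simp) (fun i _ => hnonneg i)
  have hprod : ∏ i, lam i ^ ((1:ℝ) / n) = M.det ^ ((1:ℝ)/n) := by
    rw [Real.finset_prod_rpow _ _ (fun i _ => hnonneg i), ← hdet2, hdet]
  rw [hprod] at amgm
  have : ∑ i : Fin n, (1:ℝ)/n * lam i = (1/n) * ∑ i, lam i := by
    rw [Finset.mul_sum]
  rw [this] at amgm
  rw [htr]
  calc (n:ℝ) * M.det ^ ((1:ℝ)/n) ≤ (n:ℝ) * ((1/n) * ∑ i, lam i) := by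
        apply mul_le_mul_of_nonneg_left amgm (Nat.cast_nonneg n)
    _ = ∑ i, lam i := by field_simp

private lemma exists_good (hn : 0 < n) {M : Matrix (Fin n) (Fin n) ℝ} (hM : M.PosSemidef)
    {δ : ℝ} (hδ : 0 < δ) :
    ∃ A : Matrix (Fin n) (Fin n) ℝ, A.det = 1 ∧
      (Aᵀ * M * A).trace ≤ n * M.det ^ ((1:ℝ)/n) + δ := by
  classical
  set U : Matrix (Fin n) (Fin n) ℝ := (hM.1.eigenvectorUnitary : Matrix (Fin n) (Fin n) ℝ)
    with hU
  set lam := hM.1.eigenvalues with hlam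
  have hlnn : ∀ i, 0 ≤ lam i := hM.eigenvalues_nonneg
  have hUtU : Uᵀ * U = 1 := by
    have h := Unitary.coe_star_mul_self hM.1.eigenvectorUnitary
    rwa [Matrix.star_eq_conjTranspose, conjTranspose_eq_transpose_of_trivial] at h
  have hdetU2 : U.det * U.det = 1 := by
    have h := congrArg Matrix.det hUtU
    rwa [Matrix.det_mul, Matrix.det_transpose, Matrix.det_one] at h
  have hspec : M = U * Matrix.diagonal lam * Uᵀ := by
    have h := hM.1.spectral_theorem
    rwa [Unitary.conjStarAlgAut_apply, Matrix.star_eq_conjTranspose, conjTranspose_eq_transpose_of_trivial,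
      show (RCLike.ofReal ∘ lam : Fin n → ℝ) = lam from rfl] at h
  have hcancel : ∀ Z : Matrix (Fin n) (Fin n) ℝ, Uᵀ * (U * Z) = Z := by
    intro Z; rw [← Matrix.mul_assoc, hUtU, Matrix.one_mul]
  have hkey : ∀ t : Fin n → ℝ, ((U * Matrix.diagonal t)ᵀ * M * (U * Matrix.diagonal t))
      = Matrix.diagonal (fun i => lam i * t i ^ 2) := by
    intro t
    rw [Matrix.transpose_mul, Matrix.diagonal_transpose, hspec]
    simp only [Matrix.mul_assoc]
    rw [hcancel, hcancel, Matrix.diagonal_mul_diagonal, Matrix.diagonal_mul_diagonal]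
    ext i j
    by_cases h : i = j
    · subst h; simp only [Matrix.diagonal_apply_eq]; ring
    · simp [Matrix.diagonal_apply_ne _ h]
  have hdetA : ∀ t : Fin n → ℝ, (U * Matrix.diagonal t).det = U.det * ∏ i, t i := by
    intro t; rw [Matrix.det_mul, Matrix.det_diagonal]
  have hdetM : M.det = ∏ i, lam i := by
    rw [hM.1.det_eq_prod_eigenvalues]; simp [hlam]
  by_cases hdet0 : M.det = 0
  · obtain ⟨k, -, hk0⟩ := Finset.prod_eq_zero_iff.mp (hdetM ▸ hdet0)
    set S := ∑ i ∈ Finset.univ.erase k, lam i with hS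
    have hS0 : 0 ≤ S := Finset.sum_nonneg fun i _ => hlnn i
    set s := min 1 (Real.sqrt (δ / (S + 1))) with hs
    have hs0 : 0 < s := lt_min one_pos (Real.sqrt_pos.mpr (by positivity))
    have hs2 : s ^ 2 * S ≤ δ := by
      have h1 : s ≤ Real.sqrt (δ / (S + 1)) := min_le_right _ _
      have h2 : s ^ 2 ≤ δ / (S + 1) := by
        rw [← Real.sq_sqrt (show (0:ℝ) ≤ δ / (S+1) by positivity)]
        exact pow_le_pow_left₀ hs0.le h1 2
      have h3 : s ^ 2 * S ≤ (δ / (S + 1)) * S := mul_le_mul_of_nonneg_right h2 hS0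
      have h4 : (δ / (S + 1)) * S ≤ δ := by
        rw [div_mul_eq_mul_div, div_le_iff₀ (by positivity)]
        nlinarith
      linarith
    set t : Fin n → ℝ := fun i => if i = k then U.det / s ^ (n-1) else s with ht
    refine ⟨U * Matrix.diagonal t, ?_, ?_⟩
    · rw [hdetA t, ← Finset.mul_prod_erase Finset.univ t (Finset.mem_univ k)]
      have h5 : ∏ i ∈ Finset.univ.erase k, t i = s ^ (n-1) := by
        have hcongr : ∀ i ∈ Finset.univ.erase k, t i = s := fun i hi => by
          simp only [ht]; rw [if_neg (Finset.mem_erase.mp hi).1]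
        rw [Finset.prod_congr rfl hcongr, Finset.prod_const,
          Finset.card_erase_of_mem (Finset.mem_univ k), Finset.card_univ, Fintype.card_fin]
      rw [h5]
      simp only [ht, if_pos rfl]
      field_simp
      linarith [hdetU2]
    · rw [hkey t, Matrix.trace_diagonal]
      have h6 : ∑ i, lam i * t i ^ 2 = s ^ 2 * S := by
        rw [← Finset.add_sum_erase Finset.univ _ (Finset.mem_univ k), hk0]
        have hcongr : ∀ i ∈ Finset.univ.erase k, lam i * t i ^ 2 = s ^ 2 * lam i :=
          fun i hi => by
            simp only [ht]; rw [if_neg (Finset.mem_erase.mp hi).1]; ring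
        rw [Finset.sum_congr rfl hcongr, ← Finset.mul_sum]
        ring
      rw [h6, hdet0, Real.zero_rpow (by positivity : (1:ℝ)/n ≠ 0), mul_zero, zero_add]
      exact hs2
  · have hdetpos : 0 < M.det := lt_of_le_of_ne (hdetM ▸ Finset.prod_nonneg fun i _ => hlnn i)
      (Ne.symm hdet0)
    have hl : ∀ i, 0 < lam i := by
      intro i
      rcases (hlnn i).lt_or_eq with h | h
      · exact h
      · exfalso; exact hdet0 (hdetM ▸ Finset.prod_eq_zero (Finset.mem_univ i) h.symm)
    set d := M.det ^ ((1:ℝ)/n) with hd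
    have hd0 : 0 < d := Real.rpow_pos_of_pos hdetpos _
    set r : Fin n → ℝ := fun i => Real.sqrt (d / lam i) with hr
    have hr2 : ∀ i, r i ^ 2 = d / lam i := fun i =>
      Real.sq_sqrt (div_nonneg hd0.le (hl i).le)
    set i₀ : Fin n := ⟨0, hn⟩
    set t : Fin n → ℝ := fun i => if i = i₀ then U.det * r i₀ else r i with ht
    have ht2 : ∀ i, t i ^ 2 = d / lam i := by
      intro i
      by_cases h : i = i₀
      · subst h; simp only [ht, if_pos rfl, mul_pow, hr2]
        nlinarith [hdetU2, hr2 i₀]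
      · simp only [ht, if_neg h, hr2]
    have hrprod : ∏ i, r i = 1 := by
      have hrnn : 0 ≤ ∏ i, r i := Finset.prod_nonneg fun i _ => Real.sqrt_nonneg _
      have hsq : (∏ i, r i) ^ 2 = 1 := by
        rw [← Finset.prod_pow]
        rw [Finset.prod_congr rfl (fun i _ => hr2 i), Finset.prod_div_distrib,
          Finset.prod_const, ← hdetM, Finset.card_univ, Fintype.card_fin]
        rw [hd, one_div, Real.rpow_inv_natCast_pow hdetpos.le hn.ne']
        field_simp
      have hfac : (∏ i, r i - 1) * (∏ i, r i + 1) = 0 := by nlinarith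
      rcases mul_eq_zero.mp hfac with h | h
      · linarith
      · linarith
    refine ⟨U * Matrix.diagonal t, ?_, ?_⟩
    · rw [hdetA t, ← Finset.mul_prod_erase Finset.univ t (Finset.mem_univ i₀)]
      have h5 : ∏ i ∈ Finset.univ.erase i₀, t i = ∏ i ∈ Finset.univ.erase i₀, r i := by
        refine Finset.prod_congr rfl (fun i hi => by simp [ht, (Finset.mem_erase.mp hi).1])
      rw [h5]
      have h6 := Finset.mul_prod_erase Finset.univ r (Finset.mem_univ i₀)
      simp only [ht, if_pos rfl]
      calc U.det * (U.det * r i₀ * ∏ i ∈ Finset.univ.erase i₀, r i)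
          = (U.det * U.det) * (r i₀ * ∏ i ∈ Finset.univ.erase i₀, r i) := by ring
        _ = 1 := by rw [hdetU2, h6, hrprod]; ring
    · rw [hkey t, Matrix.trace_diagonal]
      have h7 : ∀ i, lam i * t i ^ 2 = d := by
        intro i; rw [ht2 i, mul_comm, div_mul_cancel₀ _ (ne_of_gt (hl i))]
      rw [Finset.sum_congr rfl (fun i _ => h7 i), Finset.sum_const, Finset.card_univ,
        Fintype.card_fin, nsmul_eq_mul]
      linarith

end Helpers

/-- Let `P` be a convex paraboloid on `ℝⁿ`, i.e. `P(z) = P(x) + ⟪b, z−x⟫ + ½⟪M(z−x), z−x⟫`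
with `M` symmetric positive semidefinite. Then for every `x` and `ε > 0`, the infimum over
all matrices `A` with `det A = 1` of the average of `P(x + Ay)` over `B_ε(0)` equals
`P(x) + (n/(2(n+2))) · (det M)^(1/n) · ε²`. -/
theorem inf_average_convex_paraboloid (n : ℕ) (hn : 0 < n)
    (M : Matrix (Fin n) (Fin n) ℝ) (hM : M.PosSemidef)
    (b x : EuclideanSpace ℝ (Fin n)) (P : EuclideanSpace ℝ (Fin n) → ℝ)
    (hP : ∀ z, P z = P x + ⟪b, z - x⟫ + (1 / 2) * ⟪Matrix.toEuclideanLin M (z - x), z - x⟫)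
    (ε : ℝ) (hε : 0 < ε) :
    sInf {t : ℝ | ∃ A : Matrix (Fin n) (Fin n) ℝ, A.det = 1 ∧
        t = ⨍ y in Metric.ball (0 : EuclideanSpace ℝ (Fin n)) ε,
          P (x + Matrix.toEuclideanLin A y)} =
      P x + n / (2 * (n + 2)) * M.det ^ ((1 : ℝ) / n) * ε ^ 2 := by
  set S := {t : ℝ | ∃ A : Matrix (Fin n) (Fin n) ℝ, A.det = 1 ∧
      t = ⨍ y in Metric.ball (0 : EuclideanSpace ℝ (Fin n)) ε,
        P (x + Matrix.toEuclideanLin A y)} with hSdef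
  set c : ℝ := ε^2 / (2 * (n + 2)) with hc
  have hcpos : 0 < c := by positivity
  set d : ℝ := M.det ^ ((1:ℝ)/n) with hd
  set R : ℝ := P x + n / (2 * (n + 2)) * d * ε ^ 2 with hR
  have hRalt : R = P x + (n * d) * c := by rw [hR, hc]; ring
  have hmemval : ∀ A : Matrix (Fin n) (Fin n) ℝ, A.det = 1 →
      (⨍ y in Metric.ball (0 : EuclideanSpace ℝ (Fin n)) ε, P (x + Matrix.toEuclideanLin A y))
        = P x + (Aᵀ * M * A).trace * c := fun A _ => average_eq hn M b x P hP hε A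
  have hlb : ∀ t ∈ S, R ≤ t := by
    rintro t ⟨A, hA, rfl⟩
    rw [hmemval A hA, hRalt]
    have := lower_bound hn hM hA
    nlinarith
  have hbdd : BddBelow S := ⟨R, hlb⟩
  have hne : S.Nonempty := ⟨_, ⟨1, Matrix.det_one, rfl⟩⟩
  refine le_antisymm ?_ (le_csInf hne hlb)
  refine le_of_forall_pos_le_add ?_
  intro δ hδ
  obtain ⟨A, hA, htr⟩ := exists_good hn hM (show (0:ℝ) < δ / c by positivity)
  have hmem : (P x + (Aᵀ * M * A).trace * c) ∈ S := ⟨A, hA, (hmemval A hA).symm⟩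
  calc sInf S ≤ P x + (Aᵀ * M * A).trace * c := csInf_le hbdd hmem
    _ ≤ P x + (n * d + δ / c) * c := by
        have := mul_le_mul_of_nonneg_right htr hcpos.le
        linarith
    _ = R + δ := by rw [hRalt]; field_simp; ring
end

section
/- Let x₀ ∈ ℝⁿ with |x₀| = 1, let u(x) = ½(|x|−1)₊², and let M = Q·diag(1, λ, …, λ)·Qᵀ where 0 < λ < 1 and Q is orthogonal with first column x₀. Then the paraboloid P(x) = ½⟨M(x−x₀), x−x₀⟩ satisfies u(x) ≤ P(x) for all x with |x − x₀| ≤ λ/(1−λ). -/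
open Matrix
open scoped RealInnerProductSpace

private lemma paraboloid_scalar (lam t s H : ℝ) (hlam0 : 0 < lam) (hlam1 : lam < 1)
    (hst : t ≤ s) (hsH : s ≤ H) (htH : t ≤ H) (hHle' : (1 - lam) * H ≤ lam)
    (hHid : H ^ 2 = s ^ 2 + 2 * s - 2 * t) :
    (1 / 2) * s ^ 2 ≤ (1 / 2) * (lam * H ^ 2 + (1 - lam) * t ^ 2) := by
  have hs1 : (1 - lam) * s ≤ lam :=
    le_trans (mul_le_mul_of_nonneg_left hsH (by linarith)) hHle'
  have ht1 : (1 - lam) * t ≤ lam :=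
    le_trans (mul_le_mul_of_nonneg_left htH (by linarith)) hHle'
  have h1 : 0 ≤ s - t := by linarith
  have h2 : 0 ≤ 2 * lam - (1 - lam) * (s + t) := by nlinarith
  nlinarith [mul_nonneg h1 h2]

/-- Let `x₀ ∈ ℝⁿ` with `|x₀| = 1`, `u(x) = ½((|x|−1)₊)²`, and `M = Q·diag(1,λ,…,λ)·Qᵀ` where
`0 < λ < 1` and `Q` is orthogonal with first column `x₀`. Then the paraboloid
`P(x) = ½⟪M(x−x₀), x−x₀⟫` satisfies `u(x) ≤ P(x)` for all `x` with `|x − x₀| ≤ λ/(1−λ)`. -/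
theorem paraboloid_touches_from_above (n : ℕ) [NeZero n]
    (x₀ : EuclideanSpace ℝ (Fin n)) (hx₀ : ‖x₀‖ = 1)
    (lam : ℝ) (hlam0 : 0 < lam) (hlam1 : lam < 1)
    (Q : Matrix (Fin n) (Fin n) ℝ) (hQ : Qᵀ * Q = 1) (hQcol : ∀ i, Q i 0 = x₀ i)
    (M : Matrix (Fin n) (Fin n) ℝ)
    (hM : M = Q * Matrix.diagonal (fun i : Fin n => if i = 0 then (1 : ℝ) else lam) * Qᵀ)
    (x : EuclideanSpace ℝ (Fin n)) (hx : ‖x - x₀‖ ≤ lam / (1 - lam)) :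
    (1 / 2) * max (‖x‖ - 1) 0 ^ 2 ≤
      (1 / 2) * ⟪Matrix.toEuclideanLin M (x - x₀), x - x₀⟫ := by
  set h : EuclideanSpace ℝ (Fin n) := x - x₀ with hh
  -- Q * Qᵀ = 1
  have hQQT : Q * Qᵀ = 1 := by
    rwa [mul_eq_one_comm] at hQ
  -- entrywise formula for M
  have hMij : ∀ i j, M i j = lam * (if i = j then 1 else 0) + (1 - lam) * (x₀ i * x₀ j) := by
    intro i j
    have h1 : M i j = ∑ k, Q i k * ((if k = 0 then (1:ℝ) else lam) * Q j k) := by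
      rw [hM]
      simp [Matrix.mul_apply, Matrix.diagonal, Matrix.transpose_apply, Finset.sum_ite_eq',
        Finset.mul_sum]
      exact Finset.sum_congr rfl fun k _ => by split <;> ring
    have h2 : (∑ k, Q i k * Q j k) = (if i = j then (1:ℝ) else 0) := by
      have := congrFun (congrFun hQQT i) j
      simpa [Matrix.mul_apply, Matrix.one_apply, Matrix.transpose_apply] using this
    have h3 : ∀ k : Fin n, Q i k * ((if k = 0 then (1:ℝ) else lam) * Q j k)
        = lam * (Q i k * Q j k) + (1 - lam) * ((if k = 0 then (1:ℝ) else 0) * (Q i k * Q j k)) := by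
      intro k; by_cases hk : k = 0 <;> simp [hk] <;> ring
    rw [h1]
    simp only [h3]
    rw [Finset.sum_add_distrib, ← Finset.mul_sum, ← Finset.mul_sum, h2]
    have : (∑ k : Fin n, (if k = 0 then (1:ℝ) else 0) * (Q i k * Q j k)) = Q i 0 * Q j 0 := by
      simp [Finset.sum_ite_eq']
    rw [this, hQcol i, hQcol j]
  -- inner product formula
  have hinner : ⟪Matrix.toEuclideanLin M h, h⟫ = lam * ⟪h, h⟫ + (1 - lam) * ⟪x₀, h⟫ ^ 2 := by
    have e1 : ⟪Matrix.toEuclideanLin M h, h⟫ = ∑ i, (∑ j, M i j * h j) * h i := by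
      simp [Matrix.toEuclideanLin_apply, PiLp.inner_apply, RCLike.inner_apply,
        Matrix.mulVec, dotProduct, mul_comm]
    have e2 : ⟪h, h⟫ = ∑ i, h i * h i := by
      simp only [PiLp.inner_apply, RCLike.inner_apply, conj_trivial]
    have e3 : ⟪x₀, h⟫ = ∑ i, x₀ i * h i := by
      simp [PiLp.inner_apply, RCLike.inner_apply, mul_comm]
    rw [e1, e2, e3]
    have key : ∀ i, (∑ j, M i j * h j) * h i
        = lam * (h i * h i) + (1 - lam) * (x₀ i * (∑ j, x₀ j * h j) * h i) := by
      intro i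
      have : (∑ j, M i j * h j)
          = lam * h i + (1 - lam) * (x₀ i * ∑ j, x₀ j * h j) := by
        simp only [hMij]
        rw [Finset.sum_congr rfl (fun j _ => by ring :
          ∀ j ∈ Finset.univ, (lam * (if i = j then (1:ℝ) else 0) + (1 - lam) * (x₀ i * x₀ j)) * h j
            = lam * ((if i = j then (1:ℝ) else 0) * h j) + (1 - lam) * x₀ i * (x₀ j * h j))]
        rw [Finset.sum_add_distrib, ← Finset.mul_sum, ← Finset.mul_sum]
        simp [Finset.sum_ite_eq, mul_assoc]
      rw [this]; ring
    simp only [key]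
    rw [Finset.sum_add_distrib, ← Finset.mul_sum, ← Finset.mul_sum]
    rw [Finset.sum_congr rfl (fun i _ => by ring :
      ∀ i ∈ Finset.univ, x₀ i * (∑ j, x₀ j * h j) * h i = (∑ j, x₀ j * h j) * (x₀ i * h i))]
    rw [← Finset.mul_sum]
    ring
  -- scalar setup
  set t : ℝ := ⟪x₀, h⟫ with ht
  have hhh : ⟪h, h⟫ = ‖h‖ ^ 2 := real_inner_self_eq_norm_sq h
  have hxeq : x = x₀ + h := by rw [hh]; abel
  have hxnorm : ‖x‖ ^ 2 = 1 + 2 * t + ‖h‖ ^ 2 := by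
    rw [hxeq, norm_add_sq_real, hx₀, ← ht]; ring
  -- basic inequalities
  have hts : 1 + t ≤ ‖x‖ := by
    have := real_inner_le_norm x₀ x
    have hix : ⟪x₀, x⟫ = 1 + t := by
      rw [hxeq, inner_add_right, real_inner_self_eq_norm_sq, hx₀, ← ht]; ring
    rw [hix, hx₀, one_mul] at this
    exact this
  have hsH : ‖x‖ - 1 ≤ ‖h‖ := by
    have := norm_sub_norm_le x x₀
    rw [hx₀, ← hh] at this
    linarith
  have htH : t ≤ ‖h‖ := by
    have := real_inner_le_norm x₀ h
    rw [hx₀, one_mul] at this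
    rw [ht]; exact this
  have hHle : ‖h‖ ≤ lam / (1 - lam) := hx
  have hHle' : (1 - lam) * ‖h‖ ≤ lam := by
    have := (le_div_iff₀ (by linarith : (0:ℝ) < 1 - lam)).mp hx
    linarith
  rw [hinner, hhh]
  rcases le_or_gt (‖x‖ - 1) 0 with hle | hgt
  · rw [max_eq_right hle]
    have hH2 : 0 ≤ ‖h‖ ^ 2 := sq_nonneg _
    have ht2 : 0 ≤ t ^ 2 := sq_nonneg _
    nlinarith
  · rw [max_eq_left hgt.le]
    have hHid : ‖h‖ ^ 2 = (‖x‖ - 1) ^ 2 + 2 * (‖x‖ - 1) - 2 * t := by nlinarith [hxnorm]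
    exact paraboloid_scalar lam t (‖x‖ - 1) ‖h‖ hlam0 hlam1 (by linarith) hsH htH hHle' hHid
end
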